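/- arXiv:2304.11451 — 4 statements merged into one kernel-verified Lean document; each statement's English description precedes it below -/
import Mathlib

section
/- Let H be a p-subgroup of a finite group G and N a normal subgroup of G containing H. If H satisfies the partial Π-property in G, then G has a chief series passing through N, say 1 = G*₀ < G*₁ < ⋯ < G*_r = N < ⋯ < G*ₙ = G, such that |G : N_G(HG*_{i-1} ∩ G*_i)| is a power of p for every i with 1 ≤ i ≤ n. -/
open Subgroup

/-- `L/K` is a chief factor of `G`. -/
def IsChiefFactor (G : Type*) [Group G] (K L : Subgroup G) : Prop :=
  K.Normal ∧ L.Normal ∧ K < L ∧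
    ∀ N : Subgroup G, N.Normal → K ≤ N → N ≤ L → N = K ∨ N = L

/-- `σ` is a chief series of `G`. -/
def IsChiefSeries {G : Type*} [Group G] {n : ℕ} (σ : Fin (n + 1) → Subgroup G) : Prop :=
  σ 0 = ⊥ ∧ σ (Fin.last n) = ⊤ ∧
    ∀ i : Fin n, IsChiefFactor G (σ i.castSucc) (σ i.succ)

/-- `H` satisfies the partial Π-property in `G`: there is a chief series of `G` such that for
each chief factor `Gᵢ/Gᵢ₋₁`, the index `|G/Gᵢ₋₁ : N_{G/Gᵢ₋₁}(HGᵢ₋₁/Gᵢ₋₁ ∩ Gᵢ/Gᵢ₋₁)|`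
(which equals `|G : N_G(HGᵢ₋₁ ∩ Gᵢ)|`) is a `π(HGᵢ₋₁/Gᵢ₋₁ ∩ Gᵢ/Gᵢ₋₁)`-number. -/
def PartialPiProperty {G : Type*} [Group G] (H : Subgroup G) : Prop :=
  ∃ (n : ℕ) (σ : Fin (n + 1) → Subgroup G), IsChiefSeries σ ∧
    ∀ i : Fin n, ∀ q : ℕ, q.Prime →
      q ∣ (Subgroup.normalizer (((H ⊔ σ i.castSucc) ⊓ σ i.succ : Subgroup G) : Set G)).index →
      q ∣ (σ i.castSucc).relIndex ((H ⊔ σ i.castSucc) ⊓ σ i.succ)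

/-- `G` is `p`-soluble: every chief factor is a `p`-group or a `p'`-group. -/
def IsPSoluble (p : ℕ) (G : Type*) [Group G] : Prop :=
  ∀ K L : Subgroup G, IsChiefFactor G K L →
    (∃ k : ℕ, K.relIndex L = p ^ k) ∨ ¬ p ∣ K.relIndex L

/-- `G` has `p`-length at most one: there is a normal series `1 ≤ N ≤ M ≤ G` with `N` a
`p'`-group, `M/N` a `p`-group and `G/M` a `p'`-group. -/
def PLengthLEOne (p : ℕ) (G : Type*) [Group G] : Prop :=
  ∃ N M : Subgroup G, N.Normal ∧ M.Normal ∧ N ≤ M ∧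
    ¬ p ∣ Nat.card N ∧ (∃ k : ℕ, N.relIndex M = p ^ k) ∧ ¬ p ∣ M.index

/-!
Since `H` is a `p`-group, `|HGᵢ₋₁ ∩ Gᵢ : Gᵢ₋₁|` is a power of `p`, so for the chief series given
by the partial Π-property every index `|G : N_G(HGᵢ₋₁ ∩ Gᵢ)|` is a power of `p`. Intersecting
this series with `N` and then joining it with `N` gives
`1 = G₀ ∩ N ≤ ⋯ ≤ Gₙ ∩ N = N = G₀N ≤ ⋯ ≤ GₙN = G`,
in which consecutive terms are equal or form a chief factor. For a lower factor,
`H(Gᵢ₋₁ ∩ N) ∩ (Gᵢ ∩ N) = (HGᵢ₋₁ ∩ Gᵢ) ∩ N` by the modular law (as `H ≤ N`), and its normalizer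
contains `N_G(HGᵢ₋₁ ∩ Gᵢ)`; for an upper factor, `H(Gᵢ₋₁N) ∩ GᵢN = Gᵢ₋₁N` is normal in `G`.
Deleting repetitions gives the required chief series through `N`.
-/

open Relation

namespace Subgroup

variable {G : Type*} [Group G]

theorem sup_inf_assoc_of_le_of_normal {X K N : Subgroup G} [K.Normal] [N.Normal] (hXN : X ≤ N) :
    (X ⊔ K) ⊓ N = X ⊔ (K ⊓ N) := by
  rw [← SetLike.coe_set_eq, coe_inf, mul_normal, mul_normal, mul_inf_assoc _ _ _ hXN]

theorem normalizer_le_normalizer_inf (A N : Subgroup G) [N.Normal] :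
    normalizer (A : Set G) ≤ normalizer ((A ⊓ N : Subgroup G) : Set G) :=
  (le_inf le_rfl le_normalizer_of_normal).trans inf_normalizer_le_normalizer_inf

theorem exists_relIndex_eq_pow_of_le_sup {p : ℕ} [Fact p.Prime] [Finite G] {H K M : Subgroup G}
    [K.Normal] (hH : IsPGroup p H) (hM : M ≤ H ⊔ K) : ∃ k, K.relIndex M = p ^ k := by
  have hle : M.map (QuotientGroup.mk' K) ≤ H.map (QuotientGroup.mk' K) := by
    rwa [map_le_iff_le_comap, comap_map_eq, QuotientGroup.ker_mk']
  obtain ⟨k, hk⟩ := ((hH.map _).to_le hle).exists_card_eq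
  exact ⟨k, by rw [← hk, ← relIndex_ker, QuotientGroup.ker_mk']⟩

end Subgroup

theorem Fin.reflTransGen_zero_last {α : Type*} {r : α → α → Prop} {n : ℕ} (f : Fin (n + 1) → α)
    (h : ∀ i : Fin n, r (f i.castSucc) (f i.succ)) : ReflTransGen r (f 0) (f (Fin.last n)) :=
  Fin.induction (motive := fun i => ReflTransGen r (f 0) (f i)) .refl
    (fun i hi => hi.tail (h i)) _

theorem Relation.ReflTransGen.exists_relSeries {α : Type*} {r : α → α → Prop} {a b : α}
    (h : ReflTransGen r a b) :
    ∃ s : RelSeries {x : α × α | r x.1 x.2}, s.head = a ∧ s.last = b := by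
  induction h with
  | refl => exact ⟨RelSeries.singleton _ a, rfl, rfl⟩
  | tail _ hbc ih =>
    obtain ⟨s, hs, rfl⟩ := ih
    exact ⟨s.snoc _ hbc, by simpa using hs, by simp⟩

section ChiefFactors

variable {G : Type*} [Group G] {K L N : Subgroup G}

theorem IsChiefFactor.inf_eq_or_isChiefFactor_inf (hKL : IsChiefFactor G K L) [N.Normal] :
    K ⊓ N = L ⊓ N ∨ IsChiefFactor G (K ⊓ N) (L ⊓ N) := by
  obtain ⟨hK, hL, hlt, hmin⟩ := hKL
  rcases hmin (K ⊔ L ⊓ N) inferInstance le_sup_left (sup_le hlt.le inf_le_left) with hD | hD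
  · exact .inl <| le_antisymm (inf_le_inf_right _ hlt.le)
      (le_inf (le_sup_right.trans hD.le) inf_le_right)
  refine .inr ⟨inferInstance, inferInstance, lt_of_le_of_ne (inf_le_inf_right _ hlt.le) ?_, ?_⟩
  · intro he
    have : K ⊔ L ⊓ N = K := sup_eq_left.2 (he ▸ inf_le_left)
    exact hlt.ne (this ▸ hD)
  intro X hX hKX hXL
  have hXN : X ≤ N := hXL.trans inf_le_right
  rcases hmin (K ⊔ X) inferInstance le_sup_left (sup_le hlt.le (hXL.trans inf_le_left))
    with hE | hE
  · exact .inl <| le_antisymm (le_inf (le_sup_right.trans hE.le) hXN) hKX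
  · refine .inr <| le_antisymm hXL ?_
    rw [← hE, sup_comm, sup_inf_assoc_of_le_of_normal hXN]
    exact sup_le le_rfl hKX

theorem IsChiefFactor.sup_eq_or_isChiefFactor_sup (hKL : IsChiefFactor G K L) [N.Normal] :
    K ⊔ N = L ⊔ N ∨ IsChiefFactor G (K ⊔ N) (L ⊔ N) := by
  obtain ⟨hK, hL, hlt, hmin⟩ := hKL
  rcases hmin ((K ⊔ N) ⊓ L) inferInstance (le_inf le_sup_left hlt.le) inf_le_right with hD | hD
  swap
  · exact .inl <| le_antisymm (sup_le_sup_right hlt.le _) (sup_le (hD ▸ inf_le_left) le_sup_right)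
  refine .inr ⟨inferInstance, inferInstance, lt_of_le_of_ne (sup_le_sup_right hlt.le _) ?_, ?_⟩
  · intro he
    have : (K ⊔ N) ⊓ L = L := inf_eq_right.2 (he ▸ le_sup_left)
    exact hlt.ne' (this ▸ hD)
  intro X hX hKX hXL
  rcases hmin (X ⊓ L) inferInstance (le_inf (le_sup_left.trans hKX) hlt.le) inf_le_right
    with hE | hE
  · refine .inl <| le_antisymm ?_ hKX
    have hmod := sup_inf_assoc_of_le_of_normal (K := L) (le_sup_right.trans hKX : N ≤ X)
    rw [sup_comm N L, inf_eq_right.2 hXL, inf_comm, hE, sup_comm] at hmod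
    exact hmod.le
  · exact .inr <| le_antisymm hXL (sup_le (hE ▸ inf_le_left) (le_sup_right.trans hKX))

end ChiefFactors

section PiChiefFactors

variable {G : Type*} [Group G]

def IsPiChiefFactor (p : ℕ) (H K L : Subgroup G) : Prop :=
  IsChiefFactor G K L ∧ ∃ k : ℕ, (normalizer (((H ⊔ K) ⊓ L : Subgroup G) : Set G)).index = p ^ k

variable {p : ℕ} {H K L N : Subgroup G}

theorem PartialPiProperty.reflTransGen_isPiChiefFactor [Finite G] (hp : p.Prime)
    (hH : IsPGroup p H) (h : PartialPiProperty H) : ReflTransGen (IsPiChiefFactor p H) ⊥ ⊤ := by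
  have : Fact p.Prime := ⟨hp⟩
  obtain ⟨n, σ, ⟨h0, hlast, hchief⟩, hπ⟩ := h
  rw [← h0, ← hlast]
  refine Fin.reflTransGen_zero_last σ fun i => ⟨hchief i, ?_⟩
  have := (hchief i).1
  obtain ⟨k, hk⟩ := exists_relIndex_eq_pow_of_le_sup hH
    (inf_le_left : (H ⊔ σ i.castSucc) ⊓ σ i.succ ≤ _)
  exact ⟨_, Nat.eq_prime_pow_of_unique_prime_dvd index_ne_zero_of_finite fun hq hdvd =>
    (Nat.prime_dvd_prime_iff_eq hq hp).1 (hq.dvd_of_dvd_pow (hk ▸ hπ i _ hq hdvd))⟩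

theorem IsPiChiefFactor.reflTransGen_inf (hKL : IsPiChiefFactor p H K L) (hp : p.Prime)
    [N.Normal] (hHN : H ≤ N) : ReflTransGen (IsPiChiefFactor p H) (K ⊓ N) (L ⊓ N) := by
  obtain ⟨hchief, k, hk⟩ := hKL
  rcases hchief.inf_eq_or_isChiefFactor_inf (N := N) with he | hchief'
  · exact he ▸ .refl
  refine .single ⟨hchief', ?_⟩
  have := hchief.1
  have hmod : (H ⊔ K ⊓ N) ⊓ (L ⊓ N) = ((H ⊔ K) ⊓ L) ⊓ N := by
    rw [← sup_inf_assoc_of_le_of_normal hHN, inf_inf_distrib_right (H ⊔ K) L N]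
  rw [hmod]
  obtain ⟨j, -, hj⟩ := (Nat.dvd_prime_pow hp).1 <|
    hk ▸ index_dvd_of_le (normalizer_le_normalizer_inf ((H ⊔ K) ⊓ L) N)
  exact ⟨j, hj⟩

theorem IsChiefFactor.reflTransGen_sup (hKL : IsChiefFactor G K L) [N.Normal] (hHN : H ≤ N) :
    ReflTransGen (IsPiChiefFactor p H) (K ⊔ N) (L ⊔ N) := by
  rcases hKL.sup_eq_or_isChiefFactor_sup (N := N) with he | hchief
  · exact he ▸ .refl
  refine .single ⟨hchief, 0, ?_⟩
  have := hKL.1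
  rw [sup_eq_right.2 (hHN.trans le_sup_right), inf_eq_left.2 (sup_le_sup_right hKL.2.2.1.le _),
    normalizer_eq_top, index_top, pow_zero]

end PiChiefFactors

theorem stmt1 {p : ℕ} (hp : p.Prime) {G : Type*} [Group G] [Finite G]
    (H N : Subgroup G) (hHN : H ≤ N) (hN : N.Normal) (hpH : IsPGroup p H)
    (h : PartialPiProperty H) :
    ∃ (n : ℕ) (σ : Fin (n + 1) → Subgroup G) (r : Fin (n + 1)),
      IsChiefSeries σ ∧ σ r = N ∧
      ∀ i : Fin n, ∃ k : ℕ,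
        (Subgroup.normalizer (((H ⊔ σ i.castSucc) ⊓ σ i.succ : Subgroup G) : Set G)).index = p ^ k := by
  have hseries := h.reflTransGen_isPiChiefFactor hp hpH
  have hlow : ReflTransGen (IsPiChiefFactor p H) ⊥ N := by
    simpa [Function.onFun] using
      ReflTransGen.lift' (· ⊓ N) (fun _ _ hKL => hKL.reflTransGen_inf hp hHN) _ _ hseries
  have hup : ReflTransGen (IsPiChiefFactor p H) N ⊤ := by
    simpa [Function.onFun] using
      ReflTransGen.lift' (· ⊔ N) (fun _ _ hKL => hKL.1.reflTransGen_sup (p := p) hHN) _ _ hseries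
  obtain ⟨s, hs, hsN⟩ := hlow.exists_relSeries
  obtain ⟨t, htN, ht⟩ := hup.exists_relSeries
  have hst : s.last = t.head := hsN.trans htN.symm
  let u := s.smash t hst
  refine ⟨u.length, u, (Fin.last s.length).castLE (by simp [u]),
    ⟨?_, ?_, fun i => (u.step i).1⟩, ?_, fun i => (u.step i).2⟩
  · exact (RelSeries.head_smash hst).trans hs
  · exact (RelSeries.last_smash hst).trans ht
  · exact (RelSeries.smash_castLE hst _).trans hsN
end

section
/- Let P be a normal p-subgroup of a finite group G. Then P is contained in the hypercenter Z_∞(G) of G if and only if O^p(G) ≤ C_G(P). -/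
/-!
If `P ≤ Z_∞(G)`, an element `h` of order prime to `p` acts on `P ∩ Z_{n+1}(G)` by `x ↦ x z` with
`z ∈ P ∩ Z_n(G)` fixed by `h`; then `z ^ orderOf h = 1`, and `z` being a `p`-element forces `z = 1`.
So every `p'`-element centralizes `P`, `G ⧸ C_G(P)` is a `p`-group and `O^p(G) ≤ C_G(P)`.

Conversely, for a Sylow subgroup `S ⊇ P` we have `G = S · O^p(G)` by coprimality of indices, and
`O^p(G)` centralizes `P`, so `⁅X, G⁆ = ⁅X, S⁆` for `X ≤ P` (as `⁅x, s c⁆ = ⁅x, s⁆`). Iterating,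
`⁅P, G, …, G⁆ ≤ γ_n(S) = 1` because `S` is nilpotent, which puts `P` inside `Z_n(G)`.
-/

open Subgroup

/-- The hypercenter of `G`: the union of the upper central series. -/
def hypercenter (G : Type*) [Group G] : Subgroup G :=
  ⨆ n : ℕ, _root_.upperCentralSeries G n

/-- `O^p(G)`: the smallest normal subgroup of `G` with `p`-group quotient
(equivalently, with index a power of `p`, for finite `G`). -/
def pResidual (p : ℕ) (G : Type*) [Group G] : Subgroup G :=
  ⨅ N ∈ {N : Subgroup G | N.Normal ∧ ∃ k : ℕ, N.index = p ^ k}, N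

open scoped Pointwise commutatorElement

theorem conj_pow_eq_mul_pow {G : Type*} [Group G] {h x z : G} (hz : Commute h z)
    (hx : h * x * h⁻¹ = x * z) (k : ℕ) :
    h ^ k * x * (h ^ k)⁻¹ = x * z ^ k := by
  induction k with
  | zero => simp
  | succ k ih =>
    calc h ^ (k + 1) * x * (h ^ (k + 1))⁻¹ = h * (h ^ k * x * (h ^ k)⁻¹) * h⁻¹ := by group
      _ = (h * x * h⁻¹) * (h * z ^ k * h⁻¹) := by rw [ih]; group
      _ = x * z ^ (k + 1) := by
        rw [hx, (hz.pow_right k).eq, mul_inv_cancel_right, pow_succ', mul_assoc]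

namespace Subgroup

variable {G : Type*} [Group G]

theorem mem_hypercenter_iff {x : G} : x ∈ hypercenter G ↔ ∃ n, x ∈ upperCentralSeries G n :=
  mem_iSup_of_directed (upperCentralSeries_mono G).directed_le

theorem upperCentralSeries_le_hypercenter (n : ℕ) : upperCentralSeries G n ≤ hypercenter G :=
  fun _ hx ↦ mem_hypercenter_iff.mpr ⟨n, hx⟩

theorem le_upperCentralSeries_of_iterate_commutator_top_eq_bot (n : ℕ) (H : Subgroup G)
    (h : (fun K : Subgroup G ↦ ⁅K, ⊤⁆)^[n] H = ⊥) : H ≤ upperCentralSeries G n := by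
  induction n generalizing H with
  | zero => simp_all
  | succ n ih =>
    have hH : ⁅H, ⊤⁆ ≤ upperCentralSeries G n := ih _ h
    exact fun x hx y ↦ hH (commutator_mem_commutator hx (mem_top y))

theorem commutator_top_le_of_sup_eq_top {X S K : Subgroup G} [K.Normal] (hSK : S ⊔ K = ⊤)
    (hKX : K ≤ centralizer (X : Set G)) : ⁅X, ⊤⁆ ≤ ⁅X, S⁆ := by
  rw [commutator_le]
  intro x hx y _
  have hy : y ∈ (S : Set G) * K := by rw [← mul_normal, hSK]; trivial
  obtain ⟨s, hs, c, hc, rfl⟩ := hy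
  have hcx : c * x⁻¹ * c⁻¹ = x⁻¹ := by
    have hxc : Commute x c := mem_centralizer_iff.mp (hKX hc) x hx
    rw [hxc.symm.inv_right.eq, mul_inv_cancel_right]
  have : ⁅x, s * c⁆ = ⁅x, s⁆ :=
    calc ⁅x, s * c⁆ = x * s * (c * x⁻¹ * c⁻¹) * s⁻¹ := by group
      _ = ⁅x, s⁆ := by rw [hcx, commutatorElement_def]
  rw [this]
  exact commutator_mem_commutator hx hs

theorem iterate_commutator_top_le_lowerCentralSeries {P S K : Subgroup G} [P.Normal] [K.Normal]
    (hPS : P ≤ S) (hSK : S ⊔ K = ⊤) (hKP : K ≤ centralizer (P : Set G)) (m : ℕ) :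
    (fun H : Subgroup G ↦ ⁅H, ⊤⁆)^[m] P ≤ P ⊓ S.lowerCentralSeries m := by
  induction m with
  | zero => exact le_inf le_rfl hPS
  | succ m ih =>
    rw [Function.iterate_succ_apply']
    set X := (fun H : Subgroup G ↦ ⁅H, ⊤⁆)^[m] P
    have hXP : X ≤ P := ih.trans inf_le_left
    refine le_inf ((commutator_mono hXP le_rfl).trans (commutator_le_left P ⊤)) ?_
    calc ⁅X, ⊤⁆ ≤ ⁅X, S⁆ := commutator_top_le_of_sup_eq_top hSK (hKP.trans (centralizer_le hXP))
      _ ≤ ⁅S.lowerCentralSeries m, S⁆ := commutator_mono (ih.trans inf_le_right) le_rfl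

theorem commute_of_coprime_of_mem_upperCentralSeries {p : ℕ} {P : Subgroup G} (hPn : P.Normal)
    (hpP : IsPGroup p P) {h : G} (hh : (orderOf h).Coprime p) (n : ℕ) :
    ∀ x ∈ P, x ∈ upperCentralSeries G n → Commute h x := by
  induction n with
  | zero =>
    intro x _ hx
    rw [upperCentralSeries_zero, mem_bot] at hx
    exact hx ▸ Commute.one_right h
  | succ n ih =>
    intro x hxP hx
    set z := ⁅x⁻¹, h⁆
    have hxz : h * x * h⁻¹ = x * z := by simp [z, commutatorElement_def, mul_assoc]
    have hzP : z ∈ P := by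
      rw [show z = x⁻¹ * (h * x * h⁻¹) by rw [hxz, inv_mul_cancel_left]]
      exact mul_mem (inv_mem hxP) (hPn.conj_mem x hxP h)
    have hz : Commute h z := ih z hzP (mem_upperCentralSeries_succ_iff.mp (inv_mem hx) h)
    have hz1 : z = 1 := by
      obtain ⟨j, hj⟩ := hpP ⟨z, hzP⟩
      refine (pow_eq_one_iff_of_coprime (hh.pow_right j)).mp ⟨?_, congrArg Subtype.val hj⟩
      simpa [pow_orderOf_eq_one] using (conj_pow_eq_mul_pow hz hxz (orderOf h)).symm
    rw [hz1, mul_one] at hxz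
    exact mul_inv_eq_iff_eq_mul.mp hxz

theorem mem_centralizer_of_coprime_of_le_hypercenter {p : ℕ} {P : Subgroup G} (hPn : P.Normal)
    (hpP : IsPGroup p P) (hP : P ≤ hypercenter G) {h : G} (hh : (orderOf h).Coprime p) :
    h ∈ centralizer (P : Set G) := by
  refine mem_centralizer_iff.mpr fun x hx ↦ ?_
  obtain ⟨n, hn⟩ := mem_hypercenter_iff.mp (hP hx)
  exact (commute_of_coprime_of_mem_upperCentralSeries hPn hpP hh n x hx hn).symm.eq

end Subgroup

theorem IsPGroup.quotient_of_coprime_orderOf_mem {p : ℕ} (hp : p.Prime) {G : Type*} [Group G]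
    [Finite G] {N : Subgroup G} [N.Normal] (hN : ∀ g : G, (orderOf g).Coprime p → g ∈ N) :
    IsPGroup p (G ⧸ N) := by
  intro q
  induction q using QuotientGroup.induction_on with
  | H g =>
    refine ⟨(orderOf g).factorization p, ?_⟩
    rw [← QuotientGroup.mk_pow, QuotientGroup.eq_one_iff]
    apply hN
    rw [orderOf_pow_of_dvd (pow_ne_zero _ hp.ne_zero) (Nat.ordProj_dvd _ _)]
    exact (Nat.coprime_ordCompl hp (orderOf_pos g).ne').symm

theorem Sylow.sup_eq_top_of_index_eq_pow {p : ℕ} [Fact p.Prime] {G : Type*} [Group G] [Finite G]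
    (S : Sylow p G) {N : Subgroup G} {k : ℕ} (hN : N.index = p ^ k) : (S : Subgroup G) ⊔ N = ⊤ := by
  rw [← index_eq_one]
  have hcop : (S : Subgroup G).index.Coprime (p ^ k) :=
    ((Nat.Prime.coprime_iff_not_dvd Fact.out).mpr S.not_dvd_index).symm.pow_right k
  exact Nat.eq_one_of_dvd_coprimes hcop (index_dvd_of_le le_sup_left)
    (hN ▸ index_dvd_of_le le_sup_right)

section pResidual

variable {p : ℕ} {G : Type*} [Group G]

theorem infClosed_normal_index_eq_pow (hp : p.Prime) :
    InfClosed {N : Subgroup G | N.Normal ∧ ∃ k : ℕ, N.index = p ^ k} := by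
  rintro N₁ ⟨hN₁, a, ha⟩ N₂ ⟨hN₂, b, hb⟩
  refine ⟨normal_inf_normal N₁ N₂, ?_⟩
  have hdvd : (N₁ ⊓ N₂).index ∣ p ^ (b + a) := by
    rw [← relIndex_mul_index inf_le_left, inf_relIndex_left, pow_add, ← ha, ← hb]
    exact mul_dvd_mul (relIndex_dvd_index_of_normal N₂ N₁) dvd_rfl
  obtain ⟨m, -, hm⟩ := (Nat.dvd_prime_pow hp).mp hdvd
  exact ⟨m, hm⟩

theorem pResidual_normal_and_index_eq_pow [Finite G] (hp : p.Prime) :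
    (pResidual p G).Normal ∧ ∃ k : ℕ, (pResidual p G).index = p ^ k :=
  (infClosed_normal_index_eq_pow hp).biInf_mem (Set.toFinite _)
    ⟨inferInstance, 0, by simp⟩ fun _ h ↦ h

theorem pResidual_le_of_isPGroup [Finite G] [Fact p.Prime] {N : Subgroup G} [hN : N.Normal]
    (hpN : IsPGroup p (G ⧸ N)) : pResidual p G ≤ N := by
  obtain ⟨k, hk⟩ := IsPGroup.iff_card.mp hpN
  exact iInf₂_le N ⟨hN, k, by rw [index_eq_card, hk]⟩

end pResidual

theorem stmt3 {p : ℕ} (hp : p.Prime) {G : Type*} [Group G] [Finite G]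
    (P : Subgroup G) (hPn : P.Normal) (hpP : IsPGroup p P) :
    P ≤ hypercenter G ↔ pResidual p G ≤ Subgroup.centralizer (P : Set G) := by
  have := Fact.mk hp
  constructor
  · intro hP
    exact pResidual_le_of_isPGroup <| IsPGroup.quotient_of_coprime_orderOf_mem hp fun _ ↦
      Subgroup.mem_centralizer_of_coprime_of_le_hypercenter hPn hpP hP
  · intro hKP
    obtain ⟨S, hPS⟩ := hpP.exists_le_sylow
    obtain ⟨n, hn⟩ :=
      (isNilpotent_iff_lowerCentralSeries (S : Subgroup G)).mp S.isPGroup'.isNilpotent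
    obtain ⟨hKn, k, hk⟩ := pResidual_normal_and_index_eq_pow (G := G) hp
    have hSK := S.sup_eq_top_of_index_eq_pow hk
    have hbot := Subgroup.iterate_commutator_top_le_lowerCentralSeries hPS hSK hKP n
    rw [hn, inf_bot_eq, le_bot_iff] at hbot
    exact (Subgroup.le_upperCentralSeries_of_iterate_commutator_top_eq_bot n P hbot).trans
      (Subgroup.upperCentralSeries_le_hypercenter n)
end

section
/- Let G be a non-abelian p-group. Then G has exactly one normal subgroup of index p² if and only if the derived subgroup G' equals the Frattini subgroup Φ(G) and has index p² in G. -/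
/-!
Maximal subgroups of a finite `p`-group are normal of index `p`, so two distinct ones meet in a
normal subgroup of index `p²`. A non-abelian group is not cyclic and hence has two distinct
maximal subgroups; if `N` is the only normal subgroup of index `p²`, every maximal subgroup
therefore contains `N` and `Φ(G) = N`. If moreover `G' < Φ(G)`, choose `G' ≤ K ≤ Φ(G)` with
`|Φ(G) : K| = p`. In the abelian group `G/K` of order `p³` all `p`-th powers lie in `Φ(G)/K`,
of order `p`, so the `p`-power map has a kernel of order at least `p²` and there is an element
`y ∉ Φ(G)/K` of order `p`; the preimage of `⟨y⟩` is a second normal subgroup of index `p²`.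
Conversely, a normal subgroup of index `p²` has abelian quotient, so it contains `G'`, and
equality of indices forces it to be `G'`.
-/

open Subgroup

section

variable {G : Type*} [Group G]

theorem le_frattini_iff {N : Subgroup G} :
    N ≤ frattini G ↔ ∀ M : Subgroup G, IsCoatom M → N ≤ M :=
  ⟨fun h _ hM => h.trans (frattini_le_coatom hM), le_iInf₂⟩

theorem exists_isCoatom_ne_of_not_isCyclic [Finite G] (h : ¬IsCyclic G) :
    ∃ M₁ M₂ : Subgroup G, IsCoatom M₁ ∧ IsCoatom M₂ ∧ M₁ ≠ M₂ := by
  have : Nontrivial G :=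
    not_subsingleton_iff_nontrivial.mp fun _ => h isCyclic_of_subsingleton
  obtain ⟨M₁, hM₁, -⟩ :=
    (eq_top_or_exists_le_coatom (⊥ : Subgroup G)).resolve_left bot_ne_top
  obtain ⟨x, -, hx⟩ := SetLike.exists_of_lt hM₁.lt_top
  have hx_top : zpowers x ≠ ⊤ := fun hx =>
    h ⟨x, fun y => mem_zpowers_iff.mp (hx ▸ mem_top y)⟩
  obtain ⟨M₂, hM₂, hxM₂⟩ := (eq_top_or_exists_le_coatom (zpowers x)).resolve_left hx_top
  exact ⟨M₁, M₂, hM₁, hM₂, fun he => hx (he ▸ hxM₂ (mem_zpowers x))⟩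

theorem Subgroup.index_inf_of_sup_eq_top {M₁ M₂ : Subgroup G} [M₁.Normal]
    (h : M₁ ⊔ M₂ = ⊤) : (M₁ ⊓ M₂).index = M₁.index * M₂.index := by
  rw [← relIndex_mul_index inf_le_right, inf_relIndex_right, ← relIndex_sup_left, h,
    relIndex_top_right]

theorem commutator_le_of_index_eq_prime {p : ℕ} (hp : p.Prime) {N : Subgroup G} [N.Normal]
    (h : N.index = p) : commutator G ≤ N := by
  have := isCyclic_of_prime_card (hp := ⟨hp⟩) (N.index_eq_card.symm.trans h)
  exact Normal.quotient_commutative_iff_commutator_le.mp ⟨⟨IsCyclic.commGroup.mul_comm⟩⟩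

theorem commutator_le_of_index_eq_prime_sq {p : ℕ} (hp : p.Prime) {N : Subgroup G} [N.Normal]
    (h : N.index = p ^ 2) : commutator G ≤ N :=
  have := Fact.mk hp
  Normal.quotient_commutative_iff_commutator_le.mp
    (IsPGroup.isMulCommutative_of_card_eq_prime_sq (N.index_eq_card.symm.trans h))

end

open scoped IsMulCommutative in
theorem exists_pow_eq_one_notMem_of_card_sq_lt {B : Type*} [Group B] [IsMulCommutative B]
    [Finite B] {n : ℕ} {C : Subgroup B} (hC : ∀ b : B, b ^ n ∈ C)
    (hcard : Nat.card C ^ 2 < Nat.card B) :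
    ∃ y : B, y ^ n = 1 ∧ y ∉ C := by
  by_contra! h
  set f : B →* B := powMonoidHom n
  have hker : f.ker ≤ C := fun y hy => h y hy
  have hrange : f.range ≤ C := by
    rintro - ⟨b, rfl⟩
    exact hC b
  refine hcard.not_ge ?_
  calc Nat.card B = Nat.card f.ker * Nat.card f.range := by rw [← index_ker, card_mul_index]
    _ ≤ Nat.card C * Nat.card C := Nat.mul_le_mul (card_le_of_le hker) (card_le_of_le hrange)
    _ = Nat.card C ^ 2 := (sq _).symm

theorem exists_notMem_index_zpowers_eq_sq {p : ℕ} [hp : Fact p.Prime] {B : Type*} [Group B]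
    [IsMulCommutative B] [Finite B] {C : Subgroup B} (hC : ∀ b : B, b ^ p ∈ C)
    (hCcard : Nat.card C = p) (hB : Nat.card B = p ^ 3) :
    ∃ y ∉ C, (zpowers y).index = p ^ 2 := by
  obtain ⟨y, hyp, hyC⟩ := exists_pow_eq_one_notMem_of_card_sq_lt hC
    (by rw [hCcard, hB]; exact Nat.pow_lt_pow_right hp.out.one_lt (by norm_num))
  have hy : orderOf y = p := orderOf_eq_prime hyp fun h => hyC (h ▸ one_mem C)
  refine ⟨y, hyC, Nat.eq_of_mul_eq_mul_left hp.out.pos ?_⟩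
  calc p * (zpowers y).index = Nat.card (zpowers y) * (zpowers y).index := by
        rw [Nat.card_zpowers, hy]
    _ = p * p ^ 2 := by rw [card_mul_index, hB, pow_succ']

namespace IsPGroup

variable {p : ℕ} [hp : Fact p.Prime] {G : Type*} [Group G] [Finite G]

theorem normal_of_isCoatom (hG : IsPGroup p G) {M : Subgroup G} (hM : IsCoatom M) : M.Normal :=
  have := hG.isNilpotent
  Group.normalizerCondition_of_isNilpotent.normal_of_coatom M hM

theorem index_eq_of_isCoatom (hG : IsPGroup p G) {M : Subgroup G} (hM : IsCoatom M) :
    M.index = p := by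
  obtain ⟨n, hn⟩ := iff_card.mp (hG.to_subgroup M)
  obtain ⟨k, hk⟩ := hG.index M
  have hk0 : k ≠ 0 := by
    rintro rfl
    exact hM.1 (index_eq_one.mp hk)
  have hdvd : p ^ (n + 1) ∣ Nat.card G := by
    rw [← card_mul_index M, hn, hk, pow_succ]
    exact mul_dvd_mul_left _ (dvd_pow_self p hk0)
  obtain ⟨K, hK, hMK⟩ := Sylow.exists_subgroup_card_pow_succ hdvd hn
  have hKM : M ≠ K := by
    rintro rfl
    exact (Nat.pow_right_injective hp.out.two_le).ne n.succ_ne_self (hK.symm.trans hn)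
  have hK_top : K = ⊤ := hM.2 K (hMK.lt_of_ne hKM)
  refine Nat.eq_of_mul_eq_mul_left (pow_pos hp.out.pos n) ?_
  calc p ^ n * M.index = Nat.card K := by rw [← hn, card_mul_index, hK_top, card_top]
    _ = p ^ n * p := by rw [hK, pow_succ]

theorem index_inf_of_isCoatom (hG : IsPGroup p G) {M₁ M₂ : Subgroup G} (h₁ : IsCoatom M₁)
    (h₂ : IsCoatom M₂) (hne : M₁ ≠ M₂) : (M₁ ⊓ M₂).index = p ^ 2 := by
  have := hG.normal_of_isCoatom h₁
  rw [index_inf_of_sup_eq_top (h₁.sup_eq_top_of_ne h₂ hne), hG.index_eq_of_isCoatom h₁,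
    hG.index_eq_of_isCoatom h₂, sq]

theorem commutator_le_frattini (hG : IsPGroup p G) : commutator G ≤ frattini G :=
  le_frattini_iff.mpr fun _ hM =>
    have := hG.normal_of_isCoatom hM
    commutator_le_of_index_eq_prime hp.out (hG.index_eq_of_isCoatom hM)

theorem pow_mem_frattini (hG : IsPGroup p G) (g : G) : g ^ p ∈ frattini G := by
  refine le_frattini_iff.mpr (fun M hM => ?_) (mem_zpowers (g ^ p))
  have := hG.normal_of_isCoatom hM
  exact zpowers_le.mpr (hG.index_eq_of_isCoatom hM ▸ M.pow_index_mem g)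

theorem frattini_eq_of_forall_normal_index_eq_sq (hG : IsPGroup p G) (hcyc : ¬IsCyclic G)
    {N : Subgroup G} (huniq : ∀ K : Subgroup G, K.Normal → K.index = p ^ 2 → K = N) :
    frattini G = N := by
  have hinf (M₁ M₂ : Subgroup G) (h₁ : IsCoatom M₁) (h₂ : IsCoatom M₂)
      (hne : M₁ ≠ M₂) : M₁ ⊓ M₂ = N :=
    have := hG.normal_of_isCoatom h₁
    have := hG.normal_of_isCoatom h₂
    huniq _ inferInstance (hG.index_inf_of_isCoatom h₁ h₂ hne)
  obtain ⟨M₁, M₂, h₁, h₂, hne⟩ := exists_isCoatom_ne_of_not_isCyclic hcyc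
  refine le_antisymm ?_ (le_frattini_iff.mpr fun M hM => ?_)
  · rw [← hinf M₁ M₂ h₁ h₂ hne]
    exact le_inf (frattini_le_coatom h₁) (frattini_le_coatom h₂)
  · obtain rfl | hM₁ := eq_or_ne M M₁
    · exact hinf M M₂ hM h₂ hne ▸ inf_le_left
    · exact hinf M M₁ hM h₁ hM₁ ▸ inf_le_left

theorem exists_le_relIndex_eq (hG : IsPGroup p G) {H L : Subgroup G} (h : H < L) :
    ∃ K : Subgroup G, H ≤ K ∧ K ≤ L ∧ K.relIndex L = p := by
  have hne : H.subgroupOf L ≠ ⊤ := fun htop => h.not_ge (subgroupOf_eq_top.mp htop)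
  obtain ⟨C, hC, hHC⟩ := (eq_top_or_exists_le_coatom (H.subgroupOf L)).resolve_left hne
  refine ⟨C.map L.subtype, fun x hx => ⟨⟨x, h.le hx⟩, hHC hx, rfl⟩,
    map_subtype_le C, ?_⟩
  rw [relIndex, subgroupOf, comap_map_eq_self_of_injective L.subtype_injective]
  exact (hG.to_subgroup L).index_eq_of_isCoatom hC

theorem exists_normal_index_eq_sq_ne_frattini (hG : IsPGroup p G)
    (hΦ : (frattini G).index = p ^ 2) (hlt : commutator G < frattini G) :
    ∃ N : Subgroup G, N.Normal ∧ N.index = p ^ 2 ∧ N ≠ frattini G := by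
  obtain ⟨K, hGK, hKΦ, hKidx⟩ := hG.exists_le_relIndex_eq hlt
  have := Normal.of_commutator_le _ hGK
  have : IsMulCommutative (G ⧸ K) := Normal.quotient_commutative_iff_commutator_le.mpr hGK
  set π := QuotientGroup.mk' K
  have hπ : Function.Surjective π := QuotientGroup.mk'_surjective K
  have hB : Nat.card (G ⧸ K) = p ^ 3 := by
    rw [← index_eq_card, ← relIndex_mul_index hKΦ, hKidx, hΦ, ← pow_succ']
  have hC : Nat.card ((frattini G).map π) = p := by
    refine Nat.eq_of_mul_eq_mul_right (pow_pos hp.out.pos 2) ?_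
    calc Nat.card ((frattini G).map π) * p ^ 2
        = Nat.card ((frattini G).map π) * ((frattini G).map π).index := by
          rw [index_map_eq _ hπ (by rwa [QuotientGroup.ker_mk']), hΦ]
      _ = p * p ^ 2 := by rw [card_mul_index, hB, pow_succ']
  have hpow (b : G ⧸ K) : b ^ p ∈ (frattini G).map π := by
    obtain ⟨g, rfl⟩ := hπ b
    exact ⟨g ^ p, hG.pow_mem_frattini g, map_pow π g p⟩
  obtain ⟨y, hyΦ, hyidx⟩ := exists_notMem_index_zpowers_eq_sq hpow hC hB
  refine ⟨(zpowers y).comap π, (normal_of_isMulCommutative _).comap π,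
    by rwa [index_comap_of_surjective _ hπ], fun h => hyΦ ?_⟩
  obtain ⟨g, rfl⟩ := hπ y
  exact ⟨g, h ▸ mem_comap.mpr (mem_zpowers _), rfl⟩

end IsPGroup

theorem stmt4 {p : ℕ} (hp : p.Prime) {G : Type*} [Group G] [Finite G]
    (hG : IsPGroup p G) (hna : ¬ ∀ a b : G, a * b = b * a) :
    (∃! N : Subgroup G, N.Normal ∧ N.index = p ^ 2) ↔
      (commutator G = frattini G ∧ (commutator G).index = p ^ 2) := by
  have := Fact.mk hp
  constructor
  · rintro ⟨N, ⟨-, hNidx⟩, huniq⟩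
    have hcyc : ¬IsCyclic G := fun _ => hna IsCyclic.commGroup.mul_comm
    have hΦ : frattini G = N :=
      hG.frattini_eq_of_forall_normal_index_eq_sq hcyc fun K hK hKidx => huniq K ⟨hK, hKidx⟩
    have hΦidx : (frattini G).index = p ^ 2 := hΦ ▸ hNidx
    have hcomm : commutator G = frattini G := by
      refine hG.commutator_le_frattini.eq_of_not_lt fun hlt => ?_
      obtain ⟨M, hM, hMidx, hne⟩ := hG.exists_normal_index_eq_sq_ne_frattini hΦidx hlt
      exact hne ((huniq M ⟨hM, hMidx⟩).trans hΦ.symm)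
    exact ⟨hcomm, hcomm ▸ hΦidx⟩
  · rintro ⟨-, hidx⟩
    refine ⟨commutator G, ⟨inferInstance, hidx⟩, fun N ⟨hN, hNidx⟩ => ?_⟩
    have hle := commutator_le_of_index_eq_prime_sq hp hNidx
    exact (hle.eq_of_not_lt fun hlt => (index_strictAnti hlt).ne' (hidx.trans hNidx.symm)).symm
end

section
/- Let P be a finite 2-group that is dihedral, semidihedral, or generalized quaternion of order at least 16. Then for every power 2ⁿ with 1 < 2ⁿ < |P|/2, P has exactly one normal subgroup of order 2ⁿ, and that subgroup is cyclic. -/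
open Subgroup

/-- `P` is a dihedral `2`-group (of order `2 ^ (n + 1)`). -/
def IsDihedral2Group (P : Type*) [Group P] : Prop :=
  ∃ n : ℕ, 2 ≤ n ∧ Nonempty (P ≃* DihedralGroup (2 ^ n))

/-- `P` is a generalized quaternion `2`-group (of order `2 ^ (n + 2)`). -/
def IsGeneralizedQuaternion2Group (P : Type*) [Group P] : Prop :=
  ∃ n : ℕ, 1 ≤ n ∧ Nonempty (P ≃* QuaternionGroup (2 ^ n))

/-- `P` is a semidihedral `2`-group: it has order `2 ^ n` (`n ≥ 4`) and is generated by
elements `r`, `s` with `r` of order `2 ^ (n - 1)`, `s` of order `2` and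
`s * r * s⁻¹ = r ^ (2 ^ (n - 2) - 1)`. -/
def IsSemidihedralGroup (P : Type*) [Group P] : Prop :=
  ∃ n : ℕ, 4 ≤ n ∧ Nat.card P = 2 ^ n ∧
    ∃ r s : P, orderOf r = 2 ^ (n - 1) ∧ orderOf s = 2 ∧
      s * r * s⁻¹ = r ^ (2 ^ (n - 2) - 1) ∧ Subgroup.closure {r, s} = ⊤

/-!
Each of the three families has an element `r` generating a cyclic subgroup `C` of index `2`
such that for every `x ∉ C` the commutator `⁅r, x⁆` generates the subgroup of index `2` of
`C`. A normal subgroup containing such an `x` contains `⁅r, x⁆`, so a normal subgroup of order at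
most `|C| / 2` lies in the cyclic group `C`, where it is the unique subgroup of its order.
Conversely every subgroup of `C` is normal, since conjugation acts on the cyclic normal
subgroup `C` by a power map.
-/

open scoped commutatorElement

section IndexTwoCyclic

variable {G : Type*} [Group G]

theorem Subgroup.Normal.zpowers_pow {g : G} (hg : (zpowers g).Normal) (k : ℕ) :
    (zpowers (g ^ k)).Normal := by
  refine ⟨fun y hy x => ?_⟩
  obtain ⟨i, rfl⟩ := mem_zpowers_iff.mp hy
  obtain ⟨j, hj⟩ := mem_zpowers_iff.mp (hg.conj_mem g (mem_zpowers g) x)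
  have hcomm : (g ^ j) ^ k = (g ^ k) ^ j := by
    rw [← zpow_natCast, ← zpow_natCast, ← zpow_mul, ← zpow_mul, mul_comm]
  rw [← conj_zpow, ← conj_pow, ← hj, hcomm]
  exact zpow_mem (zpow_mem (mem_zpowers _) _) _

theorem Subgroup.eq_zpowers_pow_div_card [Finite G] {g : G} {H : Subgroup G}
    (hH : H ≤ zpowers g) : H = zpowers (g ^ (orderOf g / Nat.card H)) := by
  obtain ⟨c, hc⟩ : Nat.card H ∣ orderOf g := Nat.card_zpowers g ▸ card_dvd_of_le hH
  have hH0 : 0 < Nat.card H := Nat.card_pos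
  have hdiv : orderOf g / Nat.card H = c := by rw [hc, Nat.mul_div_cancel_left _ hH0]
  refine eq_of_le_of_card_ge (fun x hx => ?_) ?_
  · obtain ⟨j, rfl⟩ := mem_zpowers_iff.mp (hH hx)
    have hpow : (g ^ j) ^ Nat.card H = 1 :=
      orderOf_dvd_iff_pow_eq_one.mp (H.orderOf_dvd_natCard hx)
    have hdvd : ((Nat.card H * c : ℕ) : ℤ) ∣ j * Nat.card H := by
      rw [← hc, orderOf_dvd_iff_zpow_eq_one, zpow_mul, zpow_natCast, hpow]
    obtain ⟨i, rfl⟩ : (c : ℤ) ∣ j := by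
      rw [Nat.cast_mul, mul_comm j] at hdvd
      exact (mul_dvd_mul_iff_left (by exact_mod_cast hH0.ne')).mp hdvd
    exact ⟨i, by simp only [hdiv, ← zpow_natCast, ← zpow_mul]⟩
  · rw [Nat.card_zpowers, orderOf_pow_orderOf_div (orderOf_pos g).ne' ⟨c, hc⟩]

theorem Subgroup.Normal.eq_zpowers_commutatorElement [Finite G] {M : Subgroup G}
    (hM : M.Normal) {x : G} (hx : x ∈ M) (r : G) (h : Nat.card M ≤ orderOf ⁅r, x⁆) :
    M = zpowers ⁅r, x⁆ := by
  have hmem : ⁅r, x⁆ ∈ M := by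
    rw [commutatorElement_def]
    exact mul_mem (hM.conj_mem x hx r) (inv_mem hx)
  exact (eq_of_le_of_card_ge (zpowers_le.mpr hmem) (by rwa [Nat.card_zpowers])).symm

theorem commutatorElement_eq_of_index_eq_two {r s x : G} (hr : (zpowers r).index = 2)
    (hs : s ∉ zpowers r) (hx : x ∉ zpowers r) : ⁅r, x⁆ = ⁅r, s⁆ := by
  have hsx : s⁻¹ * x ∈ zpowers r := by
    rw [mul_mem_iff_of_index_two hr, inv_mem_iff]
    exact iff_of_false hs hx
  obtain ⟨i, hi⟩ := mem_zpowers_iff.mp hsx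
  rw [show x = s * r ^ i by rw [hi]; group]
  simp only [commutatorElement_def]
  group

theorem exists_unique_normal_of_card_eq_two_mul_orderOf [Finite G] {r s : G}
    (hcard : Nat.card G = 2 * orderOf r) (hs : s ∉ zpowers r) {d : ℕ} (hd : d ∣ orderOf r)
    (hdr : d ≤ orderOf ⁅r, s⁆) :
    ∃ N : Subgroup G, N.Normal ∧ Nat.card N = d ∧ IsCyclic N ∧
      ∀ M : Subgroup G, M.Normal → Nat.card M = d → M = N := by
  have hindex : (zpowers r).index = 2 := by
    have h := (zpowers r).card_mul_index
    rw [Nat.card_zpowers, hcard, mul_comm 2] at h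
    exact Nat.eq_of_mul_eq_mul_left (orderOf_pos r) h
  have hnormal := normal_of_index_eq_two hindex
  have hrs : ⁅r, s⁆ ∈ zpowers r := by
    rw [commutatorElement_def, mul_assoc, mul_assoc, ← mul_assoc s]
    exact mul_mem (mem_zpowers r) (hnormal.conj_mem _ (inv_mem (mem_zpowers r)) s)
  refine ⟨zpowers (r ^ (orderOf r / d)), hnormal.zpowers_pow _, ?_, inferInstance,
    fun M hM hMd => ?_⟩
  · rw [Nat.card_zpowers, orderOf_pow_orderOf_div (orderOf_pos r).ne' hd]
  have hMr : M ≤ zpowers r := by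
    intro x hxM
    by_contra hx
    rw [← commutatorElement_eq_of_index_eq_two hindex hs hx] at hrs hdr
    have hM := hM.eq_zpowers_commutatorElement hxM r (hMd ▸ hdr)
    exact hx (zpowers_le.mpr hrs (hM ▸ hxM))
  rw [eq_zpowers_pow_div_card hMr, hMd]

theorem notMem_zpowers_of_closure_pair_eq_top [Finite G] {r s : G}
    (hcl : closure {r, s} = ⊤) (hr : orderOf r < Nat.card G) : s ∉ zpowers r := by
  intro hs
  have htop : ⊤ ≤ zpowers r :=
    hcl ▸ (closure_le _).mpr
      (Set.insert_subset_iff.mpr ⟨mem_zpowers r, Set.singleton_subset_iff.mpr hs⟩)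
  have hle := card_le_of_le htop
  rw [card_top, Nat.card_zpowers] at hle
  omega

/-- `⟨r⟩` is cyclic of index `2` and `⁅r, s⁆` generates its subgroup of index `2`, which is
then the derived subgroup; for `m ≥ 1` such pairs exist exactly in the `2`-groups of maximal
class. -/
structure IsMaximalClassPair (r s : G) (m : ℕ) : Prop where
  orderOf_eq : orderOf r = 2 ^ (m + 1)
  card_eq : Nat.card G = 2 ^ (m + 2)
  notMem_zpowers : s ∉ zpowers r
  orderOf_commutatorElement : orderOf ⁅r, s⁆ = 2 ^ m

namespace IsMaximalClassPair

variable {r s : G} {m : ℕ}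

theorem map {H : Type*} [Group H] (h : IsMaximalClassPair r s m) (e : G ≃* H) :
    IsMaximalClassPair (e r) (e s) m where
  orderOf_eq := by rw [e.orderOf_eq, h.orderOf_eq]
  card_eq := by rw [← Nat.card_congr e.toEquiv, h.card_eq]
  notMem_zpowers := by
    rw [← MulEquiv.coe_toMonoidHom, ← MonoidHom.map_zpowers, mem_map_iff_mem e.injective]
    exact h.notMem_zpowers
  orderOf_commutatorElement := by
    rw [← map_commutatorElement, e.orderOf_eq, h.orderOf_commutatorElement]

theorem exists_unique_normal [Finite G] (h : IsMaximalClassPair r s m) {n : ℕ}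
    (hn : 2 ^ n < Nat.card G / 2) :
    ∃ N : Subgroup G, N.Normal ∧ Nat.card N = 2 ^ n ∧ IsCyclic N ∧
      ∀ M : Subgroup G, M.Normal → Nat.card M = 2 ^ n → M = N := by
  rw [h.card_eq, pow_succ, Nat.mul_div_cancel _ two_pos,
    Nat.pow_lt_pow_iff_right (by norm_num)] at hn
  refine exists_unique_normal_of_card_eq_two_mul_orderOf ?_ h.notMem_zpowers ?_ ?_
  · rw [h.card_eq, h.orderOf_eq, ← pow_succ']
  · rw [h.orderOf_eq]
    exact pow_dvd_pow 2 hn.le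
  · rw [h.orderOf_commutatorElement]
    exact Nat.pow_le_pow_right two_pos (by omega)

end IsMaximalClassPair

end IndexTwoCyclic

theorem DihedralGroup.isMaximalClassPair (m : ℕ) :
    IsMaximalClassPair (r 1 : DihedralGroup (2 ^ (m + 1))) (sr 0) m where
  orderOf_eq := orderOf_r_one
  card_eq := by rw [nat_card, ← pow_succ']
  notMem_zpowers := by simp [mem_zpowers_iff]
  orderOf_commutatorElement := by
    have hcomm : ⁅(r 1 : DihedralGroup (2 ^ (m + 1))), (sr 0 : DihedralGroup (2 ^ (m + 1)))⁆ =
        r 1 ^ 2 := by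
      simp [commutatorElement_def, one_add_one_eq_two]
    rw [hcomm, orderOf_pow_of_dvd two_ne_zero (by simp [orderOf_r_one, pow_succ]), orderOf_r_one,
      pow_succ, Nat.mul_div_cancel _ two_pos]

theorem QuaternionGroup.isMaximalClassPair (m : ℕ) :
    IsMaximalClassPair (a 1 : QuaternionGroup (2 ^ m)) (xa 0) m where
  orderOf_eq := by rw [orderOf_a_one, pow_succ']
  card_eq := by rw [Nat.card_eq_fintype_card, card, pow_add, mul_comm]; norm_num
  notMem_zpowers := by
    rw [← mem_powers_iff_mem_zpowers]
    simp [Submonoid.mem_powers_iff, a_one_pow]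
  orderOf_commutatorElement := by
    have hcomm : ⁅(a 1 : QuaternionGroup (2 ^ m)), (xa 0 : QuaternionGroup (2 ^ m))⁆ =
        a 1 ^ 2 := by
      -- `(a 1)⁻¹` and `(xa 0)⁻¹` unfold to `a (-1)` and `xa (2 ^ m + 0)`
      show a 1 * xa 0 * a (-1) * xa (((2 ^ m : ℕ) : ZMod (2 * 2 ^ m)) + 0) = a 1 ^ 2
      have h2m : (2 * 2 ^ m : ZMod (2 * 2 ^ m)) = 0 := by
        exact_mod_cast ZMod.natCast_self (2 * 2 ^ m)
      simp only [a_mul_xa, xa_mul_a, xa_mul_xa, a_one_pow]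
      congr 1
      push_cast
      linear_combination h2m
    rw [hcomm, orderOf_pow_of_dvd two_ne_zero (by simp [orderOf_a_one]), orderOf_a_one,
      Nat.mul_div_cancel_left _ two_pos]

section Families

variable {P : Type*} [Group P]

theorem IsDihedral2Group.exists_isMaximalClassPair (h : IsDihedral2Group P) :
    ∃ (r s : P) (m : ℕ), IsMaximalClassPair r s m := by
  obtain ⟨n, hn, ⟨e⟩⟩ := h
  obtain ⟨m, rfl⟩ : ∃ m, n = m + 1 := ⟨n - 1, by omega⟩
  exact ⟨_, _, m, (DihedralGroup.isMaximalClassPair m).map e.symm⟩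

theorem IsGeneralizedQuaternion2Group.exists_isMaximalClassPair
    (h : IsGeneralizedQuaternion2Group P) : ∃ (r s : P) (m : ℕ), IsMaximalClassPair r s m := by
  obtain ⟨n, -, ⟨e⟩⟩ := h
  exact ⟨_, _, n, (QuaternionGroup.isMaximalClassPair n).map e.symm⟩

theorem IsSemidihedralGroup.exists_isMaximalClassPair [Finite P] (h : IsSemidihedralGroup P) :
    ∃ (r s : P) (m : ℕ), IsMaximalClassPair r s m := by
  obtain ⟨k, hk, hcard, r, s, hr, -, hconj, hcl⟩ := h
  obtain ⟨p, rfl⟩ : ∃ p, k = p + 4 := ⟨k - 4, by omega⟩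
  rw [show p + 4 - 1 = p + 3 by omega] at hr
  rw [show p + 4 - 2 = p + 2 by omega] at hconj
  have hcomm : ⁅r, s⁆ = (r ^ 2) ^ (2 ^ (p + 1) + 1) := by
    have hrs : ⁅r, s⁆ = r * (s * r * s⁻¹)⁻¹ := by rw [commutatorElement_def]; group
    rw [hrs, hconj, ← pow_mul]
    simp only [← zpow_natCast]
    rw [← zpow_neg, ← zpow_one_add, zpow_eq_zpow_iff_modEq, hr, Int.modEq_iff_dvd]
    push_cast [Nat.one_le_two_pow]
    exact ⟨1, by ring⟩
  have hsq : orderOf (r ^ 2) = 2 ^ (p + 2) := by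
    rw [orderOf_pow_of_dvd two_ne_zero (hr ▸ dvd_pow_self 2 (by omega)), hr, pow_succ,
      Nat.mul_div_cancel _ two_pos]
  have hodd : Odd (2 ^ (p + 1) + 1) := (Nat.even_pow.mpr ⟨even_two, by omega⟩).add_one
  have hcop : (orderOf (r ^ 2)).Coprime (2 ^ (p + 1) + 1) :=
    hsq ▸ Nat.Coprime.pow_left _ (Nat.coprime_two_left.mpr hodd)
  refine ⟨r, s, p + 2, hr, hcard, notMem_zpowers_of_closure_pair_eq_top hcl ?_, ?_⟩
  · rw [hr, hcard]
    exact Nat.pow_lt_pow_right (by norm_num) (by omega)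
  · rw [hcomm, hcop.orderOf_pow, hsq]

end Families

theorem stmt5_general {P : Type*} [Group P] [Finite P]
    (h : IsDihedral2Group P ∨ IsSemidihedralGroup P ∨ IsGeneralizedQuaternion2Group P) :
    ∀ n : ℕ, 1 < 2 ^ n → 2 ^ n < Nat.card P / 2 →
      ∃ N : Subgroup P, N.Normal ∧ Nat.card N = 2 ^ n ∧ IsCyclic N ∧
        ∀ M : Subgroup P, M.Normal → Nat.card M = 2 ^ n → M = N := by
  obtain ⟨r, s, m, hrs⟩ : ∃ (r s : P) (m : ℕ), IsMaximalClassPair r s m := by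
    rcases h with h | h | h
    exacts [h.exists_isMaximalClassPair, h.exists_isMaximalClassPair,
      h.exists_isMaximalClassPair]
  exact fun n _ hn => hrs.exists_unique_normal hn

theorem stmt5 {P : Type*} [Group P] [Finite P] (hcard : 16 ≤ Nat.card P)
    (h : IsDihedral2Group P ∨ IsSemidihedralGroup P ∨ IsGeneralizedQuaternion2Group P) :
    ∀ n : ℕ, 1 < 2 ^ n → 2 ^ n < Nat.card P / 2 →
      ∃ N : Subgroup P, N.Normal ∧ Nat.card N = 2 ^ n ∧ IsCyclic N ∧
        ∀ M : Subgroup P, M.Normal → Nat.card M = 2 ^ n → M = N :=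
  stmt5_general h
end
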